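/- Let Φ:ℝ^{n_x}×ℝ^{n_u}→ℝ^d be Lipschitz continuous near (x̄,ū), let U⊆ℝ^{n_u} and Ω⊆ℝ^d be closed, and let (x̄,ū)∈M(0) where M(Θ)={(x,u)∈ℝ^{n_x}×U : Φ(x,u)+Θ∈Ω}. Then the following implications hold: (1) the CCQ at (x̄,ū) implies the MFC at (x̄,ū); (2) the MFC at (x̄,ū) holds if and only if both the WBCQ and the NNAMCQ hold at (x̄,ū); (3) the WBCQ together with the NNAMCQ at (x̄,ū) implies the WBCQ at (x̄,ū) together with calmness of M at (0,x̄,ū). -/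

import Mathlib

open Filter Topology Set MeasureTheory
open scoped RealInnerProductSpace ENNReal NNReal

noncomputable section

abbrev Euc (n : ℕ) : Type := EuclideanSpace ℝ (Fin n)

abbrev PL2 (α β : Type) : Type := WithLp 2 (α × β)

abbrev PL3 (α β γ : Type) : Type := PL2 α (PL2 β γ)

def pl2 {α β : Type} (a : α) (b : β) : PL2 α β := (WithLp.equiv 2 (α × β)).symm (a, b)

def pl2fst {α β : Type} (z : PL2 α β) : α := (WithLp.equiv 2 (α × β) z).1

def pl2snd {α β : Type} (z : PL2 α β) : β := (WithLp.equiv 2 (α × β) z).2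

def pl3 {α β γ : Type} (a : α) (b : β) (c : γ) : PL3 α β γ := pl2 a (pl2 b c)

section Variational

variable {E : Type} [NormedAddCommGroup E] [InnerProductSpace ℝ E]

/-- Fréchet normal cone. -/
def frechetNC (C : Set E) (x : E) : Set E :=
  {v | ∀ ε > 0, ∃ δ > 0, ∀ y ∈ C, ‖y - x‖ < δ → ⟪v, y - x⟫ ≤ ε * ‖y - x‖}

/-- Limiting (Mordukhovich) normal cone. -/
def limitingNC (C : Set E) (x : E) : Set E :=
  {v | ∃ xs vs : ℕ → E, (∀ n, xs n ∈ C ∧ vs n ∈ frechetNC C (xs n)) ∧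
      Tendsto xs atTop (𝓝 x) ∧ Tendsto vs atTop (𝓝 v)}

/-- Clarke normal cone: closed convex hull of the limiting normal cone. -/
def clarkeNC (C : Set E) (x : E) : Set E := closure (convexHull ℝ (limitingNC C x))

def NormallyRegular (C : Set E) : Prop := ∀ x ∈ C, frechetNC C x = limitingNC C x

/-- Proximal subdifferential of a real-valued function. -/
def proxSubdiff (g : E → ℝ) (x : E) : Set E :=
  {ζ | ∃ σ > 0, ∃ δ > 0, ∀ y, ‖y - x‖ < δ →
    g x + ⟪ζ, y - x⟫ - σ * ‖y - x‖ ^ 2 ≤ g y}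

/-- Limiting (Mordukhovich) subdifferential. -/
def limSubdiff (g : E → ℝ) (x : E) : Set E :=
  {ζ | ∃ xs ζs : ℕ → E, (∀ n, ζs n ∈ proxSubdiff g (xs n)) ∧
      Tendsto xs atTop (𝓝 x) ∧ Tendsto (fun n => g (xs n)) atTop (𝓝 (g x)) ∧
      Tendsto ζs atTop (𝓝 ζ)}

/-- Clarke generalized gradient: convex hull of the limiting subdifferential. -/
def clarkeSubdiff (g : E → ℝ) (x : E) : Set E := convexHull ℝ (limSubdiff g x)

/-- Tangent (contingent) cone. -/
def tangentC (C : Set E) (x : E) : Set E :=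
  {w | ∃ (t : ℕ → ℝ) (ws : ℕ → E), (∀ n, 0 < t n ∧ x + t n • ws n ∈ C) ∧
      Tendsto t atTop (𝓝 0) ∧ Tendsto ws atTop (𝓝 w)}

/-- Directional limiting normal cone in direction `w`. -/
def dirLimitingNC (C : Set E) (x : E) (w : E) : Set E :=
  {v | ∃ (t : ℕ → ℝ) (ws vs : ℕ → E),
      (∀ n, 0 < t n ∧ vs n ∈ frechetNC C (x + t n • ws n)) ∧
      Tendsto t atTop (𝓝 0) ∧ Tendsto ws atTop (𝓝 w) ∧ Tendsto vs atTop (𝓝 v)}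

end Variational

section Maps

variable {F G : Type} [NormedAddCommGroup F] [NormedAddCommGroup G]

/-- Calmness of a set-valued map at a point of its graph (neighborhood-ball form). -/
def Calm (Ψ : F → Set G) (x₀ : F) (y₀ : G) : Prop :=
  ∃ μ : ℝ, 0 ≤ μ ∧ ∃ Ux ∈ 𝓝 x₀, ∃ Vy ∈ 𝓝 y₀,
    ∀ x ∈ Ux, ∀ y ∈ Ψ x ∩ Vy, ∃ z ∈ Ψ x₀, ‖y - z‖ ≤ μ * ‖x - x₀‖

/-- Upper Lipschitz continuity at a point. -/
def UpperLipschitzAt (Ψ : F → Set G) (x₀ : F) : Prop :=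
  ∃ μ : ℝ, 0 ≤ μ ∧ ∃ Ux ∈ 𝓝 x₀,
    ∀ x ∈ Ux, ∀ y ∈ Ψ x, ∃ z ∈ Ψ x₀, ‖y - z‖ ≤ μ * ‖x - x₀‖

end Maps

/-- An absolutely continuous arc on `[t0,t1]` with values in `ℝ^n`,
recorded together with its a.e. derivative. -/
structure Arc (n : ℕ) (t0 t1 : ℝ) where
  f : ℝ → Euc n
  d : ℝ → Euc n
  intble : IntervalIntegrable d volume t0 t1
  rel : ∀ t ∈ Set.Icc t0 t1, f t = f t0 + ∫ s in t0..t, d s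


namespace Stmt10

variable {nx nu d : ℕ}

/-- `(α,β) ∈ ∂⟨λ,Φ⟩(x̄,ū) + {0} × N_U(ū)`. -/
def MultEq (Φ : PL2 (Euc nx) (Euc nu) → Euc d) (Uset : Set (Euc nu))
    (xbar : Euc nx) (ubar : Euc nu) (lam : Euc d) (α : Euc nx) (β : Euc nu) : Prop :=
  ∃ a ∈ limSubdiff (fun z => ⟪lam, Φ z⟫) (pl2 xbar ubar),
    ∃ η ∈ limitingNC Uset ubar, pl2 α β = a + pl2 0 η

/-- Calibrated constraint qualification. -/
def CCQ (Φ : PL2 (Euc nx) (Euc nu) → Euc d) (Uset : Set (Euc nu)) (Om : Set (Euc d))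
    (xbar : Euc nx) (ubar : Euc nu) : Prop :=
  ∃ μ > (0:ℝ), ∀ (lam : Euc d) (α : Euc nx) (β : Euc nu),
    lam ∈ limitingNC Om (Φ (pl2 xbar ubar)) → MultEq Φ Uset xbar ubar lam α β →
    ‖lam‖ ≤ μ * ‖β‖

/-- Mangasarian–Fromovitz condition. -/
def MFC (Φ : PL2 (Euc nx) (Euc nu) → Euc d) (Uset : Set (Euc nu)) (Om : Set (Euc d))
    (xbar : Euc nx) (ubar : Euc nu) : Prop :=
  ∀ (lam : Euc d) (α : Euc nx),
    lam ∈ limitingNC Om (Φ (pl2 xbar ubar)) → MultEq Φ Uset xbar ubar lam α 0 → lam = 0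

/-- No nonzero abnormal multiplier constraint qualification. -/
def NNAMCQ (Φ : PL2 (Euc nx) (Euc nu) → Euc d) (Uset : Set (Euc nu)) (Om : Set (Euc d))
    (xbar : Euc nx) (ubar : Euc nu) : Prop :=
  ∀ lam : Euc d,
    lam ∈ limitingNC Om (Φ (pl2 xbar ubar)) → MultEq Φ Uset xbar ubar lam 0 0 → lam = 0

/-- Weak basic constraint qualification. -/
def WBCQ (Φ : PL2 (Euc nx) (Euc nu) → Euc d) (Uset : Set (Euc nu)) (Om : Set (Euc d))
    (xbar : Euc nx) (ubar : Euc nu) : Prop :=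
  ∀ (lam : Euc d) (α : Euc nx),
    lam ∈ limitingNC Om (Φ (pl2 xbar ubar)) → MultEq Φ Uset xbar ubar lam α 0 → α = 0


end Stmt10

/-! Parts (1) and (2) are bookkeeping: a zero multiplier `λ` makes `⟪λ, Φ⟫` constant, whose
limiting subdifferential is `{0}`.

For (3), `M(0)` is the preimage of `Ω × U` under `G (x, u) = (Φ (x, u), u)` and every
`z ∈ M(Θ)` has `dist (G z, Ω × U) ≤ |Θ|`, so calmness follows from a local error bound
`dist (z, M(0)) ≤ μ dist (G z, Ω × U)`. If the bound fails along
`zₙ → (x̄, ū)`, minimise `dist (G ·, Ω × U) + κₙ ‖· - zₙ‖` over a compact ball: the minimiser `wₙ`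
still has a positive residual, and the residual towards a nearest point, normalised, is a unit
proximal normal `vₙ` for which `⟪vₙ, G⟫` satisfies a proximal inequality at `wₙ` up to the linear
error `κₙ ‖· - wₙ‖`. A cluster point `v` of `vₙ` is a limiting normal, and after a small
perturbation of `wₙ` the inequalities give genuine proximal subgradients of `⟪v, G⟫` tending to
`0`. So `v` is a nonzero abnormal multiplier, contradicting the NNAMCQ. -/

section Subdifferentials

variable {E : Type} [NormedAddCommGroup E] [InnerProductSpace ℝ E]

theorem eq_zero_of_mem_proxSubdiff_const {c : ℝ} {x ζ : E}
    (h : ζ ∈ proxSubdiff (fun _ => c) x) : ζ = 0 := by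
  obtain ⟨σ, -, δ, hδ, h⟩ := h
  have hnear : ∀ᶠ t in 𝓝 (0:ℝ), |t| * ‖ζ‖ < δ := by
    have : Tendsto (fun t : ℝ => |t| * ‖ζ‖) (𝓝 0) (𝓝 0) :=
      (continuous_abs.mul continuous_const).tendsto' _ _ (by simp)
    exact this.eventually (gt_mem_nhds hδ)
  have hsmall : ∀ᶠ t in 𝓝[>] (0:ℝ), ‖ζ‖ ^ 2 ≤ σ * t * ‖ζ‖ ^ 2 := by
    filter_upwards [nhdsWithin_le_nhds hnear, self_mem_nhdsWithin] with t ht (htpos : 0 < t)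
    have key := h (x + t • ζ) (by simpa [norm_smul] using ht)
    simp only [add_sub_cancel_left, real_inner_smul_right, real_inner_self_eq_norm_sq, norm_smul,
      Real.norm_eq_abs, abs_of_pos htpos] at key
    nlinarith
  have hlim : Tendsto (fun t => σ * t * ‖ζ‖ ^ 2) (𝓝[>] (0:ℝ)) (𝓝 0) := by
    have : Tendsto (fun t => σ * t * ‖ζ‖ ^ 2) (𝓝 (0:ℝ)) (𝓝 0) :=
      ((continuous_const.mul continuous_id).mul continuous_const).tendsto' _ _ (by simp)
    exact this.mono_left nhdsWithin_le_nhds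
  simpa using le_antisymm (ge_of_tendsto hlim hsmall) (sq_nonneg _)

theorem eq_zero_of_mem_limSubdiff_const {c : ℝ} {x ζ : E}
    (h : ζ ∈ limSubdiff (fun _ => c) x) : ζ = 0 := by
  obtain ⟨_, ζs, hprox, -, -, hζ⟩ := h
  rw [show ζs = fun _ => 0 from funext fun n => eq_zero_of_mem_proxSubdiff_const (hprox n)] at hζ
  exact tendsto_nhds_unique hζ tendsto_const_nhds

theorem sub_mem_proxSubdiff_of_mem_add_inner {g : E → ℝ} {a x ζ : E}
    (h : ζ ∈ proxSubdiff (fun z => g z + ⟪a, z⟫) x) : ζ - a ∈ proxSubdiff g x := by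
  obtain ⟨σ, hσ, δ, hδ, h⟩ := h
  refine ⟨σ, hσ, δ, hδ, fun y hy => ?_⟩
  have := h y hy
  simp only [inner_sub_left, inner_sub_right] at this ⊢
  linarith

theorem sub_mem_limSubdiff_of_mem_add_inner {g : E → ℝ} {a x ζ : E}
    (h : ζ ∈ limSubdiff (fun z => g z + ⟪a, z⟫) x) : ζ - a ∈ limSubdiff g x := by
  obtain ⟨xs, ζs, hprox, hxs, hg, hζ⟩ := h
  have hlin : Tendsto (fun n => ⟪a, xs n⟫) atTop (𝓝 ⟪a, x⟫) :=
    ((continuous_const.inner continuous_id).tendsto x).comp hxs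
  refine ⟨xs, fun n => ζs n - a, fun n => sub_mem_proxSubdiff_of_mem_add_inner (hprox n), hxs,
    by simpa using hg.sub hlin, hζ.sub_const a⟩

theorem mem_frechetNC_of_inner_le_sq {C : Set E} {x v : E} {c : ℝ}
    (h : ∀ y ∈ C, ⟪v, y - x⟫ ≤ c * ‖y - x‖ ^ 2) : v ∈ frechetNC C x := by
  intro ε hε
  refine ⟨ε / (|c| + 1), by positivity, fun y hy hlt => ?_⟩
  have hsmall : (|c| + 1) * ‖y - x‖ ≤ ε := by
    rw [lt_div_iff₀ (by positivity)] at hlt; linarith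
  calc ⟪v, y - x⟫ ≤ c * ‖y - x‖ ^ 2 := h y hy
    _ ≤ ((|c| + 1) * ‖y - x‖) * ‖y - x‖ := by nlinarith [le_abs_self c, norm_nonneg (y - x)]
    _ ≤ ε * ‖y - x‖ := by gcongr

theorem smul_sub_mem_frechetNC_of_infDist_eq {C : Set E} {p y : E}
    (hdist : Metric.infDist p C = dist p y) {c : ℝ} (hc : 0 ≤ c) :
    c • (p - y) ∈ frechetNC C y := by
  refine mem_frechetNC_of_inner_le_sq (c := c / 2) fun m hm => ?_
  have hle : ‖p - y‖ ≤ ‖(p - y) - (m - y)‖ := by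
    rw [sub_sub_sub_cancel_right, ← dist_eq_norm, ← dist_eq_norm, ← hdist]
    exact Metric.infDist_le_dist_of_mem hm
  have hsq := norm_sub_sq_real (p - y) (m - y)
  have hhalf : ⟪p - y, m - y⟫ ≤ ‖m - y‖ ^ 2 / 2 := by
    nlinarith [pow_le_pow_left₀ (norm_nonneg _) hle 2]
  rw [real_inner_smul_left]
  nlinarith

theorem mem_frechetNC_of_slice {E' : Type} [NormedAddCommGroup E'] [InnerProductSpace ℝ E']
    {C : Set E} {A : Set E'} {y v : E} {a₀ v' : E'} (f : E' → E) (hfA : ∀ a ∈ A, f a ∈ C)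
    (hnorm : ∀ a, ‖f a - y‖ = ‖a - a₀‖) (hinner : ∀ a, ⟪v, f a - y⟫ = ⟪v', a - a₀⟫)
    (hv : v ∈ frechetNC C y) : v' ∈ frechetNC A a₀ := by
  intro ε hε
  obtain ⟨δ, hδ, h⟩ := hv ε hε
  exact ⟨δ, hδ, fun a ha hlt => by
    simpa only [hnorm, hinner] using h (f a) (hfA a ha) (by rwa [hnorm])⟩

theorem neg_inner_le_of_norm_le_norm_add {u Δ : E} {r : ℝ} (h : ‖u‖ ≤ ‖u + Δ‖ + r) :
    -⟪u, Δ⟫ ≤ ‖Δ‖ ^ 2 / 2 + ‖u‖ * r := by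
  have hsq := norm_add_sq_real u Δ
  nlinarith [sq_nonneg (‖u + Δ‖ - ‖u‖), mul_le_mul_of_nonneg_left h (norm_nonneg u)]

end Subdifferentials

section Approximation

open Metric

variable {E : Type} [NormedAddCommGroup E] [InnerProductSpace ℝ E] [FiniteDimensional ℝ E]

/-- Minimise `g z - ⟪ζ, z - w⟫ + 2 τ ‖z - w‖²` over the ball, with `τ ≥ σ` so large that the
minimiser is interior. -/
theorem exists_mem_proxSubdiff_near {g : E → ℝ} {w ζ : E} {σ ε ρ : ℝ}
    (hε : 0 ≤ ε) (hρ : 0 < ρ) (hg : ContinuousOn g (closedBall w ρ))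
    (hineq : ∀ z ∈ closedBall w ρ, g w + ⟪ζ, z - w⟫ - σ * ‖z - w‖ ^ 2 - ε * ‖z - w‖ ≤ g z) :
    ∃ w' ζ', ‖w' - w‖ ≤ ε ∧ ζ' ∈ proxSubdiff g w' ∧ ‖ζ' - ζ‖ ≤ 4 * ε := by
  set τ := |σ| + 1 + ε / ρ with hτ
  have hερ : 0 ≤ ε / ρ := by positivity
  have hτ1 : 1 ≤ τ := by linarith [abs_nonneg σ]
  have hστ : σ ≤ τ := by linarith [le_abs_self σ]
  have hετ : ε < τ * ρ := by
    have : τ * ρ = (|σ| + 1) * ρ + ε := by rw [hτ]; field_simp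
    rw [this]; nlinarith [abs_nonneg σ]
  set h : E → ℝ := fun z => g z - ⟪ζ, z - w⟫ + 2 * τ * ‖z - w‖ ^ 2
  obtain ⟨w', hw', hmin⟩ := (isCompact_closedBall w ρ).exists_isMinOn
    (nonempty_closedBall.2 hρ.le) (by fun_prop : ContinuousOn h (closedBall w ρ))
  set d := ‖w' - w‖
  have hdε : τ * d ≤ ε := by
    have hup : h w' ≤ g w := by simpa [h] using hmin (mem_closedBall_self hρ.le)
    have hlow := hineq w' hw'
    have hquad : τ * d ^ 2 ≤ ε * d := by
      simp only [h] at hup; nlinarith [sq_nonneg d]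
    rcases (show 0 ≤ d from norm_nonneg _).eq_or_lt with hd0 | hd0
    · rw [← hd0]; linarith
    · nlinarith
  have hdρ : d < ρ := by nlinarith
  refine ⟨w', ζ - (4 * τ) • (w' - w), by nlinarith [norm_nonneg (w' - w)],
    ⟨2 * τ, by positivity, ρ - d, by linarith, fun y hy => ?_⟩, ?_⟩
  · have hyB : y ∈ closedBall w ρ := by
      rw [mem_closedBall, dist_eq_norm]
      calc ‖y - w‖ ≤ ‖y - w'‖ + d := norm_sub_le_norm_sub_add_norm_sub _ _ _
        _ ≤ ρ := by linarith
    have hmy : h w' ≤ h y := hmin hyB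
    have hsplit : y - w = (y - w') + (w' - w) := by abel
    have hsq : ‖y - w‖ ^ 2 = ‖y - w'‖ ^ 2 + 2 * ⟪w' - w, y - w'⟫ + d ^ 2 := by
      rw [hsplit, norm_add_sq_real, real_inner_comm]
    have hlin : ⟪ζ, y - w⟫ = ⟪ζ, y - w'⟫ + ⟪ζ, w' - w⟫ := by rw [hsplit, inner_add_right]
    simp only [h] at hmy
    rw [inner_sub_left, real_inner_smul_left]
    nlinarith
  · rw [sub_sub_cancel_left, norm_neg, norm_smul, Real.norm_of_nonneg (by positivity)]
    linarith

theorem mem_limSubdiff_of_approx {g : E → ℝ} {x ζ : E} {ρ : ℝ} (hρ : 0 < ρ)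
    (hg : ContinuousOn g (closedBall x ρ)) {w ζs : ℕ → E} {σ ε : ℕ → ℝ}
    (hw : Tendsto w atTop (𝓝 x)) (hζ : Tendsto ζs atTop (𝓝 ζ))
    (hε : Tendsto ε atTop (𝓝 0)) (hε0 : ∀ k, 0 ≤ ε k)
    (hineq : ∀ k, ∀ z ∈ closedBall x ρ,
      g (w k) + ⟪ζs k, z - w k⟫ - σ k * ‖z - w k‖ ^ 2 - ε k * ‖z - w k‖ ≤ g z) :
    ζ ∈ limSubdiff g x := by
  have hnear : ∀ᶠ k in atTop, ∃ w' ζ', ‖w' - w k‖ ≤ ε k ∧ ζ' ∈ proxSubdiff g w' ∧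
      ‖ζ' - ζs k‖ ≤ 4 * ε k := by
    filter_upwards [hw.eventually (closedBall_mem_nhds x (half_pos hρ))] with k hk
    have hsub : closedBall (w k) (ρ / 2) ⊆ closedBall x ρ :=
      closedBall_subset_closedBall' (by linarith [mem_closedBall.1 hk])
    exact exists_mem_proxSubdiff_near (hε0 k) (half_pos hρ) (hg.mono hsub)
      fun z hz => hineq k z (hsub hz)
  obtain ⟨N, hN⟩ := eventually_atTop.1 hnear
  choose w' ζ' hw' hprox hζ' using fun k => hN (k + N) (Nat.le_add_left N k)
  have hεN := (tendsto_add_atTop_iff_nat N).2 hε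
  have hw'x : Tendsto w' atTop (𝓝 x) :=
    ((tendsto_add_atTop_iff_nat N).2 hw).congr_dist <| squeeze_zero (g := fun k => ε (k + N))
      (fun _ => dist_nonneg)
      (fun k => by rw [dist_comm, dist_eq_norm]; exact hw' k) hεN
  refine ⟨w', ζ', hprox, hw'x, (hg.continuousAt (closedBall_mem_nhds x hρ)).tendsto.comp hw'x, ?_⟩
  exact ((tendsto_add_atTop_iff_nat N).2 hζ).congr_dist <|
    squeeze_zero (g := fun k => 4 * ε (k + N)) (fun _ => dist_nonneg)
    (fun k => by rw [dist_comm, dist_eq_norm]; exact hζ' k) (by simpa using hεN.const_mul 4)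

end Approximation

section ErrorBound

open Metric

variable {E F : Type} [NormedAddCommGroup E] [NormedAddCommGroup F] [InnerProductSpace ℝ F]

theorem exists_unit_normal_of_infDist_local_min [FiniteDimensional ℝ F] {G : E → F}
    {C : Set F} {B : Set E} {w : E} {κ : ℝ} {K : ℝ≥0} (hC : IsClosed C)
    (hK : LipschitzOnWith K G B) (hw : w ∈ B) (ht : 0 < infDist (G w) C)
    (hmin : ∀ z ∈ B, infDist (G w) C ≤ infDist (G z) C + κ * ‖z - w‖) :
    ∃ y ∈ C, dist (G w) y = infDist (G w) C ∧ ∃ v ∈ frechetNC C y, ‖v‖ = 1 ∧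
      ∃ σ : ℝ, ∀ z ∈ B, ⟪v, G w⟫ - σ * ‖z - w‖ ^ 2 - κ * ‖z - w‖ ≤ ⟪v, G z⟫ := by
  set t := infDist (G w) C
  have hne : C.Nonempty := by
    by_contra hC; rw [not_nonempty_iff_eq_empty] at hC; simp [t, hC] at ht
  obtain ⟨y, hy, hyd⟩ := hC.exists_infDist_eq_dist hne (G w)
  set u := G w - y
  have hut : ‖u‖ = t := by rw [← dist_eq_norm, ← hyd]
  refine ⟨y, hy, hyd.symm, t⁻¹ • u,
    smul_sub_mem_frechetNC_of_infDist_eq hyd (inv_nonneg.2 ht.le), ?_, t⁻¹ * (K ^ 2 / 2),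
    fun z hz => ?_⟩
  · rw [norm_smul, hut, Real.norm_of_nonneg (inv_nonneg.2 ht.le), inv_mul_cancel₀ ht.ne']
  have hlip : ‖G z - G w‖ ≤ K * ‖z - w‖ := by
    simpa only [dist_eq_norm] using hK.dist_le_mul z hz w hw
  have hsq : ‖G z - G w‖ ^ 2 ≤ K ^ 2 * ‖z - w‖ ^ 2 := by
    rw [← mul_pow]; exact pow_le_pow_left₀ (norm_nonneg _) hlip 2
  have hnear : ‖u‖ ≤ ‖u + (G z - G w)‖ + κ * ‖z - w‖ := by
    rw [hut, show u + (G z - G w) = G z - y by simp only [u]; abel, ← dist_eq_norm]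
    linarith [hmin z hz, infDist_le_dist_of_mem (x := G z) hy]
  have key := neg_inner_le_of_norm_le_norm_add hnear
  rw [hut, inner_sub_right] at key
  calc ⟪t⁻¹ • u, G w⟫ - t⁻¹ * (K ^ 2 / 2) * ‖z - w‖ ^ 2 - κ * ‖z - w‖
      = t⁻¹ * (⟪u, G w⟫ - K ^ 2 / 2 * ‖z - w‖ ^ 2 - t * κ * ‖z - w‖) := by
        rw [real_inner_smul_left]; field_simp
    _ ≤ t⁻¹ * ⟪u, G z⟫ := by gcongr; linarith
    _ = ⟪t⁻¹ • u, G z⟫ := (real_inner_smul_left _ _ _).symm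

/-- `w` minimises `infDist (G ·) C + κ ‖· - z₀‖` over the ball; `hfar` forces its residual to be
positive, and `v` is the normalised residual. -/
theorem exists_approx_abnormal_multiplier [NormedSpace ℝ E] [FiniteDimensional ℝ E]
    [FiniteDimensional ℝ F] {G : E → F} {C : Set F}
    {x z₀ : E} {ρ κ : ℝ} {K : ℝ≥0} (hC : IsClosed C) (hx : G x ∈ C)
    (hK : LipschitzOnWith K G (closedBall x ρ)) (hκ : 0 < κ) (hz₀ : z₀ ∈ closedBall x ρ)
    (hfar : ∀ z', G z' ∈ C → 2 / κ * infDist (G z₀) C < ‖z₀ - z'‖) :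
    ∃ w ∈ closedBall x ρ, ‖w - z₀‖ ≤ ‖z₀ - x‖ ∧ ∃ y ∈ C, dist (G w) y ≤ κ * ‖z₀ - x‖ ∧
      ∃ v ∈ frechetNC C y, ‖v‖ = 1 ∧ ∃ σ : ℝ, ∀ z ∈ closedBall x ρ,
        ⟪v, G w⟫ - σ * ‖z - w‖ ^ 2 - κ * ‖z - w‖ ≤ ⟪v, G z⟫ := by
  set t₀ := infDist (G z₀) C
  obtain ⟨w, hwB, hmin⟩ := (isCompact_closedBall x ρ).exists_isMinOn ⟨z₀, hz₀⟩
    (f := fun z => infDist (G z) C + κ * ‖z - z₀‖)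
    (((continuous_infDist_pt C).comp_continuousOn hK.continuousOn).add (by fun_prop))
  have hwz₀ : infDist (G w) C + κ * ‖w - z₀‖ ≤ t₀ := by simpa using hmin hz₀
  have hz₀x : 2 / κ * t₀ < ‖z₀ - x‖ := by simpa using hfar x hx
  have hκt₀ : 2 * t₀ < κ * ‖z₀ - x‖ := by
    rw [div_mul_eq_mul_div, div_lt_iff₀ hκ] at hz₀x; linarith
  have ht₀ : 0 ≤ t₀ := infDist_nonneg
  have htw : 0 ≤ infDist (G w) C := infDist_nonneg
  have hwz : κ * ‖w - z₀‖ ≤ t₀ := by linarith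
  have ht : 0 < infDist (G w) C := by
    refine htw.lt_of_ne fun h0 => ?_
    have hfw := hfar w ((hC.mem_iff_infDist_zero ⟨_, hx⟩).2 h0.symm)
    rw [norm_sub_rev, div_mul_eq_mul_div, div_lt_iff₀ hκ] at hfw
    nlinarith
  have hloc : ∀ z ∈ closedBall x ρ, infDist (G w) C ≤ infDist (G z) C + κ * ‖z - w‖ := by
    intro z hz
    have hwz : infDist (G w) C + κ * ‖w - z₀‖ ≤ infDist (G z) C + κ * ‖z - z₀‖ := hmin hz
    nlinarith [mul_le_mul_of_nonneg_left (norm_sub_le_norm_sub_add_norm_sub z w z₀) hκ.le]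
  obtain ⟨y, hy, hyd, hnormal⟩ := exists_unit_normal_of_infDist_local_min hC hK hwB ht hloc
  refine ⟨w, hwB, ?_, y, hy, by nlinarith [mul_nonneg hκ.le (norm_nonneg (w - z₀))], hnormal⟩
  nlinarith [norm_nonneg (z₀ - x)]

theorem zero_mem_limSubdiff_inner_of_approx [InnerProductSpace ℝ E] [FiniteDimensional ℝ E]
    {G : E → F} {x : E} {v : F} {ρ : ℝ} {K : ℝ≥0} (hρ : 0 < ρ)
    (hK : LipschitzOnWith K G (closedBall x ρ)) {w : ℕ → E} {vs : ℕ → F} {σ κ : ℕ → ℝ}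
    (hwB : ∀ k, w k ∈ closedBall x ρ) (hw : Tendsto w atTop (𝓝 x))
    (hv : Tendsto vs atTop (𝓝 v)) (hκ : Tendsto κ atTop (𝓝 0)) (hκ0 : ∀ k, 0 ≤ κ k)
    (hineq : ∀ k, ∀ z ∈ closedBall x ρ,
      ⟪vs k, G (w k)⟫ - σ k * ‖z - w k‖ ^ 2 - κ k * ‖z - w k‖ ≤ ⟪vs k, G z⟫) :
    0 ∈ limSubdiff (fun z => ⟪v, G z⟫) x := by
  have hvs : Tendsto (fun k => ‖v - vs k‖) atTop (𝓝 0) := by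
    simpa [norm_sub_rev] using tendsto_iff_norm_sub_tendsto_zero.1 hv
  refine mem_limSubdiff_of_approx (ζs := fun _ => 0) (σ := σ)
    (ε := fun k => κ k + K * ‖v - vs k‖) hρ (continuousOn_const.inner hK.continuousOn) hw
    tendsto_const_nhds (by simpa using hκ.add (hvs.const_mul (K : ℝ)))
    (fun k => add_nonneg (hκ0 k) (by positivity)) fun k z hz => ?_
  have hlip : ‖G z - G (w k)‖ ≤ K * ‖z - w k‖ := by
    simpa only [dist_eq_norm] using hK.dist_le_mul z hz (w k) (hwB k)
  have hcs : |⟪v - vs k, G z - G (w k)⟫| ≤ ‖v - vs k‖ * (K * ‖z - w k‖) :=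
    (abs_real_inner_le_norm _ _).trans (mul_le_mul_of_nonneg_left hlip (norm_nonneg _))
  have := hineq k z hz
  rw [inner_sub_left, inner_sub_right, inner_sub_right] at hcs
  simp only [inner_zero_left, add_zero]
  nlinarith [neg_abs_le (⟪v, G z⟫ - ⟪v, G (w k)⟫ - (⟪vs k, G z⟫ - ⟪vs k, G (w k)⟫))]

/-- The NNAMCQ for the constraint `G z ∈ C` at `x`. -/
def NoAbnormalMultiplier [InnerProductSpace ℝ E] (G : E → F) (C : Set F) (x : E) : Prop :=
  ∀ v ∈ limitingNC C (G x), 0 ∈ limSubdiff (fun z => ⟪v, G z⟫) x → v = 0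

theorem NoAbnormalMultiplier.exists_error_bound [InnerProductSpace ℝ E] [FiniteDimensional ℝ E]
    [FiniteDimensional ℝ F] {G : E → F} {C : Set F} {x : E}
    (hreg : NoAbnormalMultiplier G C x) (hC : IsClosed C) (hx : G x ∈ C)
    (hG : ∃ (K : ℝ≥0) (s : Set E), s ∈ 𝓝 x ∧ LipschitzOnWith K G s) :
    ∃ μ ≥ 0, ∀ᶠ z in 𝓝 x, ∃ z', G z' ∈ C ∧ ‖z - z'‖ ≤ μ * infDist (G z) C := by
  obtain ⟨K, s, hs, hK⟩ := hG
  obtain ⟨ρ, hρ, hρs⟩ := nhds_basis_closedBall.mem_iff.1 hs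
  replace hK := hK.mono hρs
  by_contra! hfar
  set κ : ℕ → ℝ := fun n => 1 / ((n : ℝ) + 1)
  have hκ : Tendsto κ atTop (𝓝 0) := tendsto_one_div_add_atTop_nhds_zero_nat
  have hκpos (n : ℕ) : 0 < κ n := Nat.one_div_pos_of_nat
  have hseq (n : ℕ) : ∃ z ∈ closedBall x ρ ∩ ball x (κ n),
      ∀ z', G z' ∈ C → 2 / κ n * infDist (G z) C < ‖z - z'‖ :=
    ((hfar _ (by positivity)).and_eventually (inter_mem (closedBall_mem_nhds x hρ)
      (ball_mem_nhds x (hκpos n)))).exists.imp fun _ h => ⟨h.2, h.1⟩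
  choose z hzB hzfar using hseq
  have hzx : Tendsto (fun n => ‖z n - x‖) atTop (𝓝 0) :=
    squeeze_zero (fun _ => norm_nonneg _) (fun n => (mem_ball_iff_norm.1 (hzB n).2).le) hκ
  choose w hwB hwz y hy hyd v hv hv1 σ hσ using fun n =>
    exists_approx_abnormal_multiplier hC hx hK (hκpos n) (hzB n).1 (hzfar n)
  have hwx : Tendsto w atTop (𝓝 x) := by
    refine tendsto_iff_norm_sub_tendsto_zero.2 <| squeeze_zero (fun _ => norm_nonneg _)
      (fun n => ?_) (by simpa using hzx.const_mul 2)
    linarith [norm_sub_le_norm_sub_add_norm_sub (w n) (z n) x, hwz n]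
  have hyx : Tendsto y atTop (𝓝 (G x)) :=
    ((hK.continuousOn.continuousAt (closedBall_mem_nhds x hρ)).tendsto.comp hwx).congr_dist
      (squeeze_zero (fun _ => dist_nonneg) hyd (by simpa using hκ.mul hzx))
  obtain ⟨v₀, hv₀, φ, hφ, hvφ⟩ := (isCompact_sphere (0 : F) 1).tendsto_subseq
    (fun n => mem_sphere_zero_iff_norm.2 (hv1 n))
  have hN : v₀ ∈ limitingNC C (G x) :=
    ⟨y ∘ φ, v ∘ φ, fun k => ⟨hy _, hv _⟩, hyx.comp hφ.tendsto_atTop, hvφ⟩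
  have h0 := zero_mem_limSubdiff_inner_of_approx hρ hK (fun k => hwB (φ k))
    (hwx.comp hφ.tendsto_atTop) hvφ (hκ.comp hφ.tendsto_atTop) (fun k => (hκpos _).le)
    fun k => hσ (φ k)
  simp [hreg v₀ hN h0] at hv₀

end ErrorBound

section ProductSets

variable {α β : Type}

theorem pl2_pl2fst_pl2snd (z : PL2 α β) : pl2 (pl2fst z) (pl2snd z) = z := rfl

def pl2prod (A : Set α) (B : Set β) : Set (PL2 α β) := {w | pl2fst w ∈ A ∧ pl2snd w ∈ B}

theorem pl2_mem_pl2prod {A : Set α} {B : Set β} {a : α} {b : β} (ha : a ∈ A) (hb : b ∈ B) :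
    pl2 a b ∈ pl2prod A B :=
  ⟨ha, hb⟩

theorem inner_pl2_pl2 [NormedAddCommGroup α] [InnerProductSpace ℝ α] [NormedAddCommGroup β]
    [InnerProductSpace ℝ β] (a c : α) (b e : β) : ⟪pl2 a b, pl2 c e⟫ = ⟪a, c⟫ + ⟪b, e⟫ := rfl

variable [NormedAddCommGroup α] [NormedAddCommGroup β]

theorem pl2_sub_pl2 (a c : α) (b e : β) : pl2 a b - pl2 c e = pl2 (a - c) (b - e) := rfl

theorem norm_pl2_zero_right (a : α) : ‖pl2 a (0 : β)‖ = ‖a‖ := WithLp.norm_toLp_fst 2 α β a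

theorem norm_pl2_zero_left (b : β) : ‖pl2 (0 : α) b‖ = ‖b‖ := WithLp.norm_toLp_snd 2 α β b

theorem continuous_pl2fst : Continuous (pl2fst : PL2 α β → α) := WithLp.continuous_fst 2 α β

theorem continuous_pl2snd : Continuous (pl2snd : PL2 α β → β) := WithLp.continuous_snd 2 α β

theorem IsClosed.pl2prod {A : Set α} {B : Set β} (hA : IsClosed A) (hB : IsClosed B) :
    IsClosed (pl2prod A B) :=
  (hA.preimage continuous_pl2fst).inter (hB.preimage continuous_pl2snd)

variable [InnerProductSpace ℝ α] [InnerProductSpace ℝ β]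

theorem frechetNC_pl2prod {A : Set α} {B : Set β} {y v : PL2 α β} (hy : y ∈ pl2prod A B)
    (hv : v ∈ frechetNC (pl2prod A B) y) :
    pl2fst v ∈ frechetNC A (pl2fst y) ∧ pl2snd v ∈ frechetNC B (pl2snd y) := by
  have hfst (a : α) : pl2 a (pl2snd y) - y = pl2 (a - pl2fst y) 0 := by
    show pl2 a (pl2snd y) - pl2 (pl2fst y) (pl2snd y) = _
    rw [pl2_sub_pl2, sub_self]
  have hsnd (b : β) : pl2 (pl2fst y) b - y = pl2 0 (b - pl2snd y) := by
    show pl2 (pl2fst y) b - pl2 (pl2fst y) (pl2snd y) = _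
    rw [pl2_sub_pl2, sub_self]
  constructor
  · refine mem_frechetNC_of_slice (fun a => pl2 a (pl2snd y)) (fun a ha => pl2_mem_pl2prod ha hy.2)
      (fun a => ?_) (fun a => ?_) hv
    · rw [hfst, norm_pl2_zero_right]
    · rw [hfst, ← pl2_pl2fst_pl2snd v, inner_pl2_pl2, inner_zero_right, add_zero]; rfl
  · refine mem_frechetNC_of_slice (fun b => pl2 (pl2fst y) b) (fun b hb => pl2_mem_pl2prod hy.1 hb)
      (fun b => ?_) (fun b => ?_) hv
    · rw [hsnd, norm_pl2_zero_left]
    · rw [hsnd, ← pl2_pl2fst_pl2snd v, inner_pl2_pl2, inner_zero_right, zero_add]; rfl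

theorem limitingNC_pl2prod {A : Set α} {B : Set β} {y v : PL2 α β}
    (hv : v ∈ limitingNC (pl2prod A B) y) :
    pl2fst v ∈ limitingNC A (pl2fst y) ∧ pl2snd v ∈ limitingNC B (pl2snd y) := by
  obtain ⟨ys, vs, hmem, hys, hvs⟩ := hv
  have hsplit (n : ℕ) := frechetNC_pl2prod (hmem n).1 (hmem n).2
  exact ⟨⟨_, _, fun n => ⟨(hmem n).1.1, (hsplit n).1⟩,
      (continuous_pl2fst.tendsto y).comp hys, (continuous_pl2fst.tendsto v).comp hvs⟩,
    ⟨_, _, fun n => ⟨(hmem n).1.2, (hsplit n).2⟩,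
      (continuous_pl2snd.tendsto y).comp hys, (continuous_pl2snd.tendsto v).comp hvs⟩⟩

end ProductSets

namespace Stmt10

variable {nx nu d : ℕ}

/-- `M(Θ) = {z | constraintMap Φ z + (Θ, 0) ∈ Ω × U}`. -/
def constraintMap (Φ : PL2 (Euc nx) (Euc nu) → Euc d) (z : PL2 (Euc nx) (Euc nu)) :
    PL2 (Euc d) (Euc nu) :=
  pl2 (Φ z) (pl2snd z)

theorem exists_lipschitzOnWith_constraintMap {Φ : PL2 (Euc nx) (Euc nu) → Euc d}
    {s : Set (PL2 (Euc nx) (Euc nu))} {K : ℝ≥0} (hK : LipschitzOnWith K Φ s) :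
    ∃ K' : ℝ≥0, LipschitzOnWith K' (constraintMap Φ) s :=
  ⟨_, (WithLp.prod_lipschitzWith_toLp 2 _ _).comp_lipschitzOnWith
    (hK.prodMk (LipschitzWith.mk_one fun x y => WithLp.dist_snd_le x y).lipschitzOnWith)⟩

variable {Φ : PL2 (Euc nx) (Euc nu) → Euc d} {Uset : Set (Euc nu)} {Om : Set (Euc d)}
  {xbar : Euc nx} {ubar : Euc nu}

theorem MultEq.eq_zero_of_multiplier_eq_zero {α : Euc nx} {β : Euc nu}
    (h : MultEq Φ Uset xbar ubar 0 α β) : α = 0 := by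
  obtain ⟨a, ha, η, -, hsum⟩ := h
  simp only [inner_zero_left] at ha
  rw [eq_zero_of_mem_limSubdiff_const ha, zero_add] at hsum
  exact congrArg pl2fst hsum

theorem CCQ.mfc (h : CCQ Φ Uset Om xbar ubar) : MFC Φ Uset Om xbar ubar := by
  obtain ⟨μ, -, hμ⟩ := h
  intro lam α hlam hm
  simpa using hμ lam α 0 hlam hm

theorem mfc_iff_wbcq_and_nnamcq :
    MFC Φ Uset Om xbar ubar ↔ WBCQ Φ Uset Om xbar ubar ∧ NNAMCQ Φ Uset Om xbar ubar := by
  refine ⟨fun h => ⟨fun lam α hlam hm => ?_, fun lam hlam hm => h lam 0 hlam hm⟩,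
    fun ⟨hW, hN⟩ lam α hlam hm => ?_⟩
  · obtain rfl := h lam α hlam hm
    exact hm.eq_zero_of_multiplier_eq_zero
  · obtain rfl := hW lam α hlam hm
    exact hN lam hlam hm

theorem NNAMCQ.noAbnormalMultiplier (hN : NNAMCQ Φ Uset Om xbar ubar) :
    NoAbnormalMultiplier (constraintMap Φ) (pl2prod Om Uset) (pl2 xbar ubar) := by
  intro v hv h0
  obtain ⟨lam, η, rfl⟩ : ∃ lam η, v = pl2 lam η := ⟨_, _, (pl2_pl2fst_pl2snd v).symm⟩
  obtain ⟨hlam, hη⟩ := limitingNC_pl2prod hv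
  have hsplit : (fun z => ⟪pl2 lam η, constraintMap Φ z⟫) =
      fun z => ⟪lam, Φ z⟫ + ⟪pl2 0 η, z⟫ := by
    funext z
    rw [← pl2_pl2fst_pl2snd z, constraintMap, inner_pl2_pl2, inner_pl2_pl2, inner_zero_left,
      zero_add]
    rfl
  rw [hsplit] at h0
  have ha := sub_mem_limSubdiff_of_mem_add_inner h0
  obtain rfl : lam = 0 := hN lam hlam ⟨_, ha, η, hη, by rw [zero_sub, neg_add_cancel]; rfl⟩
  simp only [inner_zero_left, zero_sub] at ha
  obtain rfl : η = 0 := congrArg pl2snd (neg_eq_zero.1 (eq_zero_of_mem_limSubdiff_const ha))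
  rfl

theorem NNAMCQ.calm (hN : NNAMCQ Φ Uset Om xbar ubar) (hU : IsClosed Uset) (hOm : IsClosed Om)
    (hΦ : ∃ (K : ℝ≥0) (s : Set (PL2 (Euc nx) (Euc nu))),
        s ∈ 𝓝 (pl2 xbar ubar) ∧ LipschitzOnWith K Φ s)
    (hfeas : ubar ∈ Uset ∧ Φ (pl2 xbar ubar) ∈ Om) :
    Calm (fun Θ : Euc d => {z : PL2 (Euc nx) (Euc nu) | pl2snd z ∈ Uset ∧ Φ z + Θ ∈ Om})
      0 (pl2 xbar ubar) := by
  obtain ⟨K, s, hs, hK⟩ := hΦ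
  obtain ⟨K', hK'⟩ := exists_lipschitzOnWith_constraintMap hK
  obtain ⟨μ, hμ, hbound⟩ := hN.noAbnormalMultiplier.exists_error_bound (hOm.pl2prod hU)
    (pl2_mem_pl2prod hfeas.2 hfeas.1) ⟨K', s, hs, hK'⟩
  refine ⟨μ, hμ, univ, univ_mem, _, hbound, fun Θ _ z ⟨⟨hzU, hzΩ⟩, hz⟩ => ?_⟩
  obtain ⟨z', ⟨hz'Ω, hz'U⟩, hzz'⟩ := hz
  refine ⟨z', ⟨hz'U, by rwa [add_zero]⟩, hzz'.trans ?_⟩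
  have hres : Metric.infDist (constraintMap Φ z) (pl2prod Om Uset) ≤ ‖Θ‖ := by
    calc _ ≤ dist (constraintMap Φ z) (pl2 (Φ z + Θ) (pl2snd z)) :=
          Metric.infDist_le_dist_of_mem (pl2_mem_pl2prod hzΩ hzU)
      _ = ‖Θ‖ := by
          rw [dist_eq_norm, constraintMap, pl2_sub_pl2, sub_add_cancel_left, sub_self,
            norm_pl2_zero_right, norm_neg]
  rw [sub_zero]
  gcongr

/-- Implications among the constraint qualifications:
(1) CCQ ⟹ MFC; (2) MFC ⟺ WBCQ ∧ NNAMCQ; (3) WBCQ ∧ NNAMCQ ⟹ WBCQ together with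
calmness of the perturbed constraint map `M(Θ) = {(x,u) ∈ ℝ^{n_x} × U : Φ(x,u)+Θ ∈ Ω}`
at `(0,(x̄,ū))`. -/
theorem cq_implications
    (Φ : PL2 (Euc nx) (Euc nu) → Euc d)
    (Uset : Set (Euc nu)) (Om : Set (Euc d))
    (hU : IsClosed Uset) (hOm : IsClosed Om)
    (xbar : Euc nx) (ubar : Euc nu)
    (hΦ : ∃ (K : ℝ≥0) (s : Set (PL2 (Euc nx) (Euc nu))),
        s ∈ 𝓝 (pl2 xbar ubar) ∧ LipschitzOnWith K Φ s)
    (hfeas : ubar ∈ Uset ∧ Φ (pl2 xbar ubar) ∈ Om) :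
    (CCQ Φ Uset Om xbar ubar → MFC Φ Uset Om xbar ubar) ∧
    (MFC Φ Uset Om xbar ubar ↔ WBCQ Φ Uset Om xbar ubar ∧ NNAMCQ Φ Uset Om xbar ubar) ∧
    (WBCQ Φ Uset Om xbar ubar ∧ NNAMCQ Φ Uset Om xbar ubar →
      WBCQ Φ Uset Om xbar ubar ∧
      Calm (fun Θ : Euc d => {z : PL2 (Euc nx) (Euc nu) | pl2snd z ∈ Uset ∧ Φ z + Θ ∈ Om})
        0 (pl2 xbar ubar)) :=
  ⟨CCQ.mfc, mfc_iff_wbcq_and_nnamcq, fun ⟨hW, hN⟩ => ⟨hW, hN.calm hU hOm hΦ hfeas⟩⟩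

end Stmt10

end
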